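/- arXiv:0812.4329 — 4 statements merged into one kernel-verified Lean document; each statement's English description precedes it below -/
import Mathlib

section
/- Let D be a strongly connected digraph with n > 2 vertices such that every vertex v satisfies d⁺(v) + d⁻(v) ≥ n. Then D is Hamiltonian. -/
/-- The Z-mapping graph of a digraph with arc relation `A`: a bipartite graph on
`V ⊕ V` where `Sum.inl u` (that is, `u⁺`) is adjacent to `Sum.inr v` (that is, `v⁻`)
iff `(u,v)` is an arc. -/
def Zmap {V : Type*} (A : V → V → Prop) : SimpleGraph (V ⊕ V) where
  Adj x y := (∃ u v, A u v ∧ x = Sum.inl u ∧ y = Sum.inr v) ∨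
             (∃ u v, A u v ∧ x = Sum.inr v ∧ y = Sum.inl u)
  symm := by
    constructor
    rintro x y (⟨u,v,h,h1,h2⟩|⟨u,v,h,h1,h2⟩)
    · exact Or.inr ⟨u,v,h,h2,h1⟩
    · exact Or.inl ⟨u,v,h,h2,h1⟩
  loopless := by constructor; rintro x (⟨u,v,_,h1,h2⟩|⟨u,v,_,h1,h2⟩) <;> simp_all

/-- A digraph is Hamiltonian if there is a cyclic permutation of all its vertices
that follows the arcs. -/
def DHamiltonian {V : Type*} [Fintype V] [DecidableEq V] (A : V → V → Prop) : Prop :=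
  ∃ σ : Equiv.Perm V, σ.IsCycle ∧ σ.support = Finset.univ ∧ ∀ v, A v (σ v)

/-- Out-degree in a digraph. -/
def outDeg {V : Type*} [Fintype V] (A : V → V → Prop) [DecidableRel A] (v : V) : ℕ :=
  (Finset.univ.filter (fun u => A v u)).card

/-- In-degree in a digraph. -/
def inDeg {V : Type*} [Fintype V] (A : V → V → Prop) [DecidableRel A] (v : V) : ℕ :=
  (Finset.univ.filter (fun u => A u v)).card

/-!
Induction on the number of vertices. Let `C = c₀ … c_{l-1}` be a longest cycle and suppose that it
misses a vertex. Take a strong component `Q` of `D - C` that no arc of `D - C` leaves. A vertex off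
`C` has at most `l` arcs to and from `C` (otherwise it could be inserted into `C`), so `D[Q]`
satisfies the degree condition and, by induction, has a Hamiltonian cycle `w₀ … w_{q-1}`.

Maximality of `C` forbids ears: if `P` is a path off `C` from `x` to `y` with `c_i → x` and
`y → c_{i+t}` for some `1 ≤ t ≤ |P|`, then `C` can be rerouted through `P` into a longer cycle.
So the out-neighbours of `y` on `C` avoid the shifts by `1, …, |P|` of the in-neighbours of `x`,
and `|N⁺_C(y)| + min(l, |N⁻_C(x)| + |P| - 1) ≤ l`. For the path around `Q` from `w_{j+1}` to `w_j`,
together with `|N⁻_C(w_j)| + |N⁺_C(w_j)| ≥ l + 2 - q` from the degree condition, this forces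
`N⁺_C(w_j) = ∅` for all `j` as soon as some `w_j` has an in-neighbour on `C`. Strong connectivity
provides such an in-neighbour (through an ear from `C` into `Q`) and an arc from `Q` to `C`.
-/

open Finset Relation Pointwise

section

variable {V : Type*}

theorem ZMod.forall_of_forall_add_one_imp {l : ℕ} [NeZero l] {p : ZMod l → Prop}
    (h : ∀ j, p (j + 1) → p j) {j₀ : ZMod l} (hj₀ : p j₀) (j : ZMod l) : p j := by
  have key : ∀ n : ℕ, p (j₀ - n) := by
    intro n
    induction n with
    | zero => simpa using hj₀
    | succ n ih => exact h _ (by rwa [Nat.cast_succ, sub_add_eq_sub_sub, sub_add_cancel])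
  simpa using key (j₀ - j).val

theorem ZMod.eq_univ_of_add_one_mem {l : ℕ} [NeZero l] {X : Finset (ZMod l)} (hX : X.Nonempty)
    (h : ∀ x ∈ X, x + 1 ∈ X) : X = univ := by
  refine eq_univ_iff_forall.mpr fun y => by_contra fun hy => ?_
  obtain ⟨x, hx⟩ := hX
  exact ZMod.forall_of_forall_add_one_imp (p := (· ∉ X)) (fun j hj hjX => hj (h j hjX)) hy x hx

theorem ZMod.min_le_card_add_image_Icc {l : ℕ} [NeZero l] {S : Finset (ZMod l)} (hS : S.Nonempty)
    {k : ℕ} (hk : 1 ≤ k) :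
    min l (S.card + k - 1) ≤ (S + (Icc 1 k).image (Nat.cast : ℕ → ZMod l)).card := by
  induction k, hk using Nat.le_induction with
  | base => simp [Finset.card_add_singleton]
  | succ k hk ih =>
    set X := S + (Icc 1 k).image ((↑) : ℕ → ZMod l)
    have hsub : X ⊆ S + (Icc 1 (k + 1)).image (↑) :=
      add_subset_add_left (image_subset_image (Icc_subset_Icc_right k.le_succ))
    have hshift : ∀ x ∈ X, x + 1 ∈ S + (Icc 1 (k + 1)).image (↑) := by
      intro x hx
      obtain ⟨s, hs, _, hu, rfl⟩ := mem_add.mp hx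
      obtain ⟨t, ht, rfl⟩ := mem_image.mp hu
      refine mem_add.mpr ⟨s, hs, ((t + 1 : ℕ) : ZMod l), mem_image_of_mem _ ?_, by push_cast; ring⟩
      simp only [mem_Icc] at ht ⊢
      omega
    by_cases hclosed : ∀ x ∈ X, x + 1 ∈ X
    · have hX : X = univ := ZMod.eq_univ_of_add_one_mem (hS.add (by simpa using hk)) hclosed
      have := card_le_card hsub
      rw [hX, card_univ, ZMod.card] at this
      omega
    · push Not at hclosed
      obtain ⟨x, hx, hx1⟩ := hclosed
      have := card_le_card (insert_subset (hshift x hx) hsub)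
      rw [card_insert_of_notMem hx1] at this
      omega

/-- `a` cannot increase strictly all the way round `ZMod q`; at a maximum the `min` is `l`, and from
there `hstep` propagates `b = 0` backwards around the whole cycle. -/
theorem ZMod.eq_zero_of_forall_le_add {q l : ℕ} [NeZero q] (hql : q ≤ l) (a b : ZMod q → ℕ)
    (hab : ∀ j, l + 2 ≤ a j + b j + q)
    (hstep : ∀ j, 1 ≤ a (j + 1) → b j + min l (a (j + 1) + q - 1) ≤ l)
    (ha : ∃ j, 1 ≤ a j) (j : ZMod q) : b j = 0 := by
  obtain ⟨j₁, hj₁⟩ := ha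
  have hpos : ∀ j, 1 ≤ a j := ZMod.forall_of_forall_add_one_imp (fun j h => by
    have := hab j; have := hstep j h; omega) hj₁
  obtain ⟨j₀, hj₀⟩ := Finite.exists_max a
  have hbig : l - q + 1 ≤ a j₀ := by
    have := hab (j₀ - 1)
    have := hj₀ (j₀ - 1)
    have := hstep (j₀ - 1) (by simpa using hpos j₀)
    rw [sub_add_cancel] at this
    omega
  have hall : ∀ j, l - q + 1 ≤ a j := ZMod.forall_of_forall_add_one_imp (fun j h => by
    have := hab j; have := hstep j (by omega); omega) hbig
  have := hstep j (by have := hall (j + 1); omega)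
  have := hall (j + 1)
  omega

theorem Relation.ReflTransGen.exists_last_exit {r : V → V → Prop} {X : Set V} {x y : V}
    (h : ReflTransGen r x y) (hx : x ∈ X) (hy : y ∉ X) :
    ∃ a ∈ X, ∃ b ∉ X, r a b ∧ ReflTransGen (fun u v => r u v ∧ u ∉ X ∧ v ∉ X) b y := by
  induction h with
  | refl => exact absurd hx hy
  | @tail b y _ hby ih =>
    by_cases hb : b ∈ X
    · exact ⟨b, hb, y, hy, hby, .refl⟩
    · obtain ⟨a, ha, b', hb', hab', hpath⟩ := ih hb
      exact ⟨a, ha, b', hb', hab', hpath.tail ⟨hby, hb, hy⟩⟩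

theorem Relation.ReflTransGen.exists_nodup_isChain_append_mem {r : V → V → Prop} {S : Set V}
    {x y : V} (h : ReflTransGen r x y) (hy : y ∈ S) :
    ∃ P : List V, ∃ z ∈ S, P.Nodup ∧ (∀ v ∈ P, v ∉ S) ∧ (P ++ [z]).IsChain r ∧
      (P ++ [z]).head? = some x := by
  induction h using Relation.ReflTransGen.head_induction_on with
  | refl => exact ⟨[], y, hy, by simp⟩
  | @head x x' hxx' _ ih =>
    obtain ⟨P, z, hz, hnd, hPS, hch, hhd⟩ := ih
    by_cases hx : x ∈ S
    · exact ⟨[], x, hx, by simp⟩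
    by_cases hxP : x ∈ P
    · obtain ⟨s, t, rfl⟩ := List.append_of_mem hxP
      refine ⟨x :: t, z, hz, (List.nodup_append.mp hnd).2.1, fun v hv => hPS v (by simp_all),
        hch.suffix ⟨s, by simp⟩, by simp⟩
    · refine ⟨x :: P, z, hz, List.nodup_cons.mpr ⟨hxP, hnd⟩, ?_, ?_, by simp⟩
      · simpa [hx] using hPS
      · refine List.isChain_cons.mpr ⟨fun w hw => ?_, hch⟩
        obtain rfl : x' = w := by simpa [hhd] using hw
        exact hxx'

theorem Relation.ReflTransGen.exists_ear {r : V → V → Prop} {X Y : Set V} {x y : V}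
    (h : ReflTransGen r x y) (hx : x ∈ X) (hy : y ∈ Y) (hYX : ∀ v ∈ Y, v ∉ X) :
    ∃ a ∈ X, ∃ P : List V, ∃ z ∈ Y, P.Nodup ∧ (∀ v ∈ P, v ∉ X ∧ v ∉ Y) ∧
      (a :: (P ++ [z])).IsChain r := by
  obtain ⟨a, ha, b, -, hab, hpath⟩ := h.exists_last_exit hx (hYX y hy)
  obtain ⟨P, z, hz, hnd, hPY, hch, hhd⟩ := hpath.exists_nodup_isChain_append_mem hy
  have hPX : ∀ v ∈ P ++ [z], v ∉ X :=
    hch.backwards_induction _ _ (fun u v huv _ => huv.2.1) (fun _ => by simpa using hYX z hz)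
  refine ⟨a, ha, P, z, hz, hnd, fun v hv => ⟨hPX v (by simp [hv]), hPY v hv⟩,
    List.isChain_cons.mpr ⟨fun w hw => ?_, hch.imp fun _ _ huv => huv.1⟩⟩
  obtain rfl : b = w := by simpa [hhd] using hw
  exact hab

theorem Relation.ReflTransGen.subtype_of_forall_mem {r : V → V → Prop} {S : Set V}
    (hS : ∀ a ∈ S, ∀ b, r a b → b ∈ S) {x y : V} (h : ReflTransGen r x y) (hx : x ∈ S) :
    ∃ hy : y ∈ S, ReflTransGen (fun a b : S => r a b) ⟨x, hx⟩ ⟨y, hy⟩ := by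
  induction h with
  | refl => exact ⟨hx, .refl⟩
  | tail _ hbc ih =>
    obtain ⟨hb, hpath⟩ := ih
    exact ⟨hS _ hb _ hbc, hpath.tail hbc⟩

theorem Finset.exists_subset_forall_reflTransGen {r : V → V → Prop} (R : Finset V)
    (hR : R.Nonempty) (hclosed : ∀ a ∈ R, ∀ b, r a b → b ∈ R) :
    ∃ Q ⊆ R, Q.Nonempty ∧ (∀ a ∈ Q, ∀ b, r a b → b ∈ Q) ∧
      ∀ a b : Q, ReflTransGen (fun u v : Q => r u v) a b := by
  classical
  obtain ⟨Q, hQ, hmin⟩ := exists_min_image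
    (R.powerset.filter fun Q => Q.Nonempty ∧ ∀ a ∈ Q, ∀ b, r a b → b ∈ Q) card
    ⟨R, by simpa using ⟨hR, hclosed⟩⟩
  simp only [mem_filter, mem_powerset] at hQ hmin
  obtain ⟨hQR, hQne, hQclosed⟩ := hQ
  refine ⟨Q, hQR, hQne, hQclosed, fun ⟨a, ha⟩ ⟨b, hb⟩ => ?_⟩
  set T := Q.filter (ReflTransGen r a)
  have hTQ : T = Q := eq_of_subset_of_card_le (filter_subset _ _) <| hmin T
    ⟨(filter_subset _ _).trans hQR, ⟨a, mem_filter.mpr ⟨ha, .refl⟩⟩, fun v hv w hvw => by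
      simp only [T, mem_filter] at hv ⊢
      exact ⟨hQclosed v hv.1 w hvw, hv.2.tail hvw⟩⟩
  have hab : ReflTransGen r a b := (mem_filter.mp (hTQ ▸ hb : b ∈ T)).2
  exact (hab.subtype_of_forall_mem (S := (Q : Set V)) hQclosed ha).2

def IsDCycle (A : V → V → Prop) {m : ℕ} (c : ZMod m → V) : Prop :=
  Function.Injective c ∧ ∀ i, A (c i) (c (i + 1))

theorem IsDCycle.le_card [Fintype V] {A : V → V → Prop} {m : ℕ} {c : ZMod m → V}
    (hc : IsDCycle A c) : m ≤ Fintype.card V := by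
  rcases Nat.eq_zero_or_pos m with rfl | hm
  · exact Nat.zero_le _
  · have : NeZero m := ⟨hm.ne'⟩
    simpa using Fintype.card_le_of_injective c hc.1

theorem IsDCycle.surjective [Fintype V] {A : V → V → Prop} {c : ZMod (Fintype.card V) → V}
    (hc : IsDCycle A c) : Function.Surjective c := by
  rcases (Fintype.card V).eq_zero_or_pos with hV | hV
  · exact fun v => ((Fintype.card_eq_zero_iff.mp hV).false v).elim
  · have : NeZero (Fintype.card V) := ⟨hV.ne'⟩
    exact ((Fintype.bijective_iff_injective_and_card c).mpr ⟨hc.1, ZMod.card _⟩).2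

theorem exists_isDCycle_of_isChain {A : V → V → Prop} {L : List V} (hne : L ≠ []) (hnd : L.Nodup)
    (hch : L.IsChain A) (hclose : ∀ x ∈ L.getLast?, ∀ y ∈ L.head?, A x y) :
    ∃ c : ZMod L.length → V, IsDCycle A c := by
  have : NeZero L.length := ⟨by simpa using hne⟩
  refine ⟨fun i => L[i.val]'(ZMod.val_lt i), fun i j hij => ZMod.val_injective _
    (hnd.getElem_inj_iff.mp hij), fun i => ?_⟩
  have hsucc : (i + 1).val = (i.val + 1) % L.length := by
    rw [ZMod.val_add, ZMod.val_one_eq_one_mod, Nat.add_mod_mod]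
  have hi := ZMod.val_lt i
  simp only [hsucc]
  rcases Nat.lt_or_ge (i.val + 1) L.length with hlt | hge
  · simp only [Nat.mod_eq_of_lt hlt]
    exact List.isChain_iff_getElem.mp hch _ hlt
  · have hlast : i.val = L.length - 1 := by omega
    simp only [hlast, Nat.sub_add_cancel (Nat.one_le_of_lt hi), Nat.mod_self]
    exact hclose _ (by simp [List.getLast?_eq_getElem?]) _ (by simp [List.head?_eq_getElem?])

theorem exists_isDCycle_of_rel_of_reflTransGen {A : V → V → Prop} {u w : V} (huw : A u w)
    (hwu : ReflTransGen A w u) : ∃ m, 0 < m ∧ ∃ c : ZMod m → V, IsDCycle A c := by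
  obtain ⟨P, z, hz, hnd, hPu, hch, hhd⟩ :=
    hwu.exists_nodup_isChain_append_mem (S := {u}) (Set.mem_singleton u)
  obtain rfl : u = z := (Set.mem_singleton_iff.mp hz).symm
  refine ⟨_, by simp, exists_isDCycle_of_isChain (by simp)
    (List.nodup_append.mpr ⟨hnd, by simp, fun a ha _ hb hab => hPu a ha (by simpa [hab] using hb)⟩)
    hch fun x hx y hy => ?_⟩
  obtain rfl : u = x := by simpa using hx
  obtain rfl : w = y := by simpa [hhd] using hy
  exact huw

def IsLongestDCycle (A : V → V → Prop) {l : ℕ} (c : ZMod l → V) : Prop :=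
  IsDCycle A c ∧ ∀ m (c' : ZMod m → V), IsDCycle A c' → m ≤ l

theorem exists_isLongestDCycle [Fintype V] {A : V → V → Prop}
    (h : ∃ m, 0 < m ∧ ∃ c : ZMod m → V, IsDCycle A c) :
    ∃ l, 0 < l ∧ ∃ c : ZMod l → V, IsLongestDCycle A c := by
  classical
  obtain ⟨m, hm, c, hc⟩ := h
  set P : ℕ → Prop := fun m => ∃ c : ZMod m → V, IsDCycle A c
  have hle := Nat.le_findGreatest (P := P) hc.le_card ⟨c, hc⟩
  obtain ⟨c', hc'⟩ := Nat.findGreatest_spec (P := P) hc.le_card ⟨c, hc⟩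
  exact ⟨_, hm.trans_le hle, c', hc', fun m c hc => Nat.le_findGreatest hc.le_card ⟨c, hc⟩⟩

def cycleSegment {m : ℕ} (c : ZMod m → V) (i : ZMod m) (k : ℕ) : List V :=
  (List.range k).map fun j : ℕ => c (i + j)

section cycleSegment

variable {m : ℕ} {c : ZMod m → V} {i : ZMod m} {k : ℕ}

@[simp]
theorem length_cycleSegment : (cycleSegment c i k).length = k := by
  simp [cycleSegment]

theorem isChain_cycleSegment {A : V → V → Prop} (h : ∀ j, A (c j) (c (j + 1))) :
    (cycleSegment c i k).IsChain A := by
  refine (List.isChain_map _).mpr ((List.isChain_range _ _).mpr fun j _ => ?_)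
  simpa [add_assoc] using h (i + j)

theorem nodup_cycleSegment (hc : Function.Injective c) (hk : k ≤ m) :
    (cycleSegment c i k).Nodup := by
  refine List.Nodup.map_on (fun a ha b hb hab => ?_) List.nodup_range
  rw [List.mem_range] at ha hb
  have := (ZMod.natCast_eq_natCast_iff' a b m).mp (add_left_cancel (hc hab))
  rwa [Nat.mod_eq_of_lt (by omega), Nat.mod_eq_of_lt (by omega)] at this

theorem head?_cycleSegment (hk : 0 < k) : (cycleSegment c i k).head? = some (c i) := by
  obtain ⟨k, rfl⟩ := Nat.exists_eq_add_of_lt hk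
  simp [cycleSegment, List.range_succ_eq_map]

theorem getLast?_cycleSegment (hk : 0 < k) :
    (cycleSegment c i k).getLast? = some (c (i + (k - 1 : ℕ))) := by
  obtain ⟨k, rfl⟩ := Nat.exists_eq_add_of_lt hk
  simp [cycleSegment, List.range_succ]

theorem mem_range_of_mem_cycleSegment {v : V} (hv : v ∈ cycleSegment c i k) : v ∈ Set.range c := by
  obtain ⟨j, -, rfl⟩ := List.mem_map.mp hv
  exact ⟨_, rfl⟩

end cycleSegment

def inIndices (A : V → V → Prop) [DecidableRel A] {l : ℕ} [NeZero l] (c : ZMod l → V) (w : V) :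
    Finset (ZMod l) :=
  univ.filter fun i => A (c i) w

def outIndices (A : V → V → Prop) [DecidableRel A] {l : ℕ} [NeZero l] (c : ZMod l → V) (w : V) :
    Finset (ZMod l) :=
  univ.filter fun i => A w (c i)

section LongestCycle

variable {A : V → V → Prop} {l : ℕ} {c : ZMod l → V} (hc : IsLongestDCycle A c)
  {P : List V} (hPnd : P.Nodup) (hPch : P.IsChain A) (hPc : ∀ v ∈ P, v ∉ Set.range c)
  {x y : V} (hx : P.head? = some x) (hy : P.getLast? = some y)
include hc hPnd hPch hPc hx hy

theorem IsLongestDCycle.not_arc_of_ear {i : ZMod l} (hin : A (c i) x) {t : ℕ} (ht : 1 ≤ t)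
    (htP : t ≤ P.length) (htl : t ≤ l) : ¬ A y (c (i + t)) := by
  intro hout
  set L := cycleSegment c (i + t) (l - t + 1) ++ P
  have hsegLast : (cycleSegment c (i + t) (l - t + 1)).getLast? = some (c i) := by
    rw [getLast?_cycleSegment (by omega), add_assoc, ← Nat.cast_add,
      show t + (l - t + 1 - 1) = l by omega, ZMod.natCast_self, add_zero]
  have hPne : P ≠ [] := by rintro rfl; simp at hx
  obtain ⟨c', hc'⟩ := exists_isDCycle_of_isChain (L := L) (by simp [L, hPne])
    (List.nodup_append.mpr ⟨nodup_cycleSegment hc.1.1 (by omega), hPnd,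
      fun a ha b hb hab => hPc b hb (hab ▸ mem_range_of_mem_cycleSegment ha)⟩)
    ((isChain_cycleSegment hc.1.2).append hPch (by simpa [hsegLast, hx] using hin))
    (by simpa [L, List.getLast?_append, List.head?_append, hy, head?_cycleSegment] using hout)
  have := hc.2 _ c' hc'
  simp only [L, List.length_append, length_cycleSegment] at this
  omega

variable [NeZero l] [DecidableRel A]

theorem IsLongestDCycle.card_outIndices_add_min_le (hS : (inIndices A c x).Nonempty) {k : ℕ}
    (hk : 1 ≤ k) (hkP : k ≤ P.length) (hkl : k ≤ l) :
    (outIndices A c y).card + min l ((inIndices A c x).card + k - 1) ≤ l := by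
  have hgrow := ZMod.min_le_card_add_image_Icc hS hk
  set X := inIndices A c x + (Icc 1 k).image (Nat.cast : ℕ → ZMod l)
  have hdisj : Disjoint X (outIndices A c y) := by
    refine disjoint_left.mpr fun j hj hj' => ?_
    obtain ⟨i, hi, _, hu, rfl⟩ := mem_add.mp hj
    obtain ⟨t, ht, rfl⟩ := mem_image.mp hu
    rw [mem_Icc] at ht
    exact hc.not_arc_of_ear hPnd hPch hPc hx hy (mem_filter.mp hi).2 ht.1 (by omega)
      (by omega) (mem_filter.mp hj').2
  have := card_union_of_disjoint hdisj ▸ card_le_univ (X ∪ outIndices A c y)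
  rw [ZMod.card] at this
  omega

omit hPnd hPch hPc hx hy in
theorem IsLongestDCycle.card_inIndices_add_card_outIndices_le {w : V} (hw : w ∉ Set.range c) :
    (inIndices A c w).card + (outIndices A c w).card ≤ l := by
  have hin := card_le_univ (inIndices A c w)
  have hout := card_le_univ (outIndices A c w)
  rw [ZMod.card] at hin hout
  rcases (inIndices A c w).eq_empty_or_nonempty with hS | hS
  · simpa [hS] using hout
  · have := hc.card_outIndices_add_min_le (P := [w]) (x := w) (y := w) (by simp) (by simp)
      (by simpa using hw) rfl rfl hS le_rfl (by simp) NeZero.one_le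
    omega

end LongestCycle

theorem outDeg_subtype {A : V → V → Prop} [DecidableRel A] (S : Finset V) (u : S) :
    outDeg (fun a b : S => A a b) u = (S.filter (A u ·)).card := by
  rw [outDeg, univ_eq_attach, filter_attach, card_map, card_attach]

theorem inDeg_subtype {A : V → V → Prop} [DecidableRel A] (S : Finset V) (u : S) :
    inDeg (fun a b : S => A a b) u = (S.filter (A · u)).card := by
  rw [inDeg, univ_eq_attach, filter_attach (A · u), card_map, card_attach]

theorem exists_sink_component [Fintype V] {A : V → V → Prop} {l : ℕ} {c : ZMod l → V} {v : V}
    (hv : v ∉ Set.range c) :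
    ∃ Q : Finset V, Q.Nonempty ∧ (∀ w ∈ Q, w ∉ Set.range c) ∧
      (∀ u ∈ Q, ∀ w, A u w ∧ w ∉ Set.range c → w ∈ Q) ∧
      ∀ a b : Q, ReflTransGen (fun u w : Q => A u w) a b := by
  classical
  obtain ⟨Q, hQR, hQne, hsink, hQstrong⟩ :=
    (univ.filter (· ∉ Set.range c)).exists_subset_forall_reflTransGen
      (r := fun u w => A u w ∧ w ∉ Set.range c) ⟨v, mem_filter.mpr ⟨mem_univ _, hv⟩⟩
      fun _ _ w hw => mem_filter.mpr ⟨mem_univ _, hw.2⟩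
  exact ⟨Q, hQne, fun w hw => (mem_filter.mp (hQR hw)).2, hsink,
    fun a b => ReflTransGen.mono (fun _ _ h => h.1) _ _ (hQstrong a b)⟩

section SinkComponent

variable [DecidableEq V] {A : V → V → Prop} [DecidableRel A] {l : ℕ} [NeZero l] {c : ZMod l → V}

theorem card_inIndices (hc : Function.Injective c) (w : V) :
    (inIndices A c w).card = ((univ.image c).filter (A · w)).card := by
  rw [filter_image, card_image_of_injective _ hc]
  rfl

theorem card_outIndices (hc : Function.Injective c) (w : V) :
    (outIndices A c w).card = ((univ.image c).filter (A w ·)).card := by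
  rw [filter_image, card_image_of_injective _ hc]
  rfl

variable [Fintype V] {Q : Finset V} (hQc : ∀ v ∈ Q, v ∉ Set.range c)
include hQc

theorem card_add_card_le (hc : Function.Injective c) : l + Q.card ≤ Fintype.card V := by
  have hCQ : Disjoint (univ.image c) Q :=
    disjoint_right.mpr fun v hv hvC => hQc v hv (by simpa using hvC)
  simpa [card_union_of_disjoint hCQ, card_image_of_injective _ hc] using
    card_le_univ (univ.image c ∪ Q)

variable (hsink : ∀ u ∈ Q, ∀ v, A u v ∧ v ∉ Set.range c → v ∈ Q)
include hsink

theorem card_le_degree_split (hc : Function.Injective c) {w : V} (hw : w ∈ Q)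
    (hdeg : Fintype.card V ≤ outDeg A w + inDeg A w) :
    Fintype.card V ≤ (inIndices A c w).card + (outIndices A c w).card + (Q.filter (A w ·)).card +
      (Q.filter (A · w)).card + (Fintype.card V - l - Q.card) := by
  rw [card_inIndices hc, card_outIndices hc]
  set C := univ.image c
  have hC : C.card = l := by rw [card_image_of_injective _ hc, card_univ, ZMod.card]
  have hCQ : Disjoint C Q := disjoint_right.mpr fun v hv hvC => hQc v hv (by simpa [C] using hvC)
  have hout : univ.filter (A w ·) ⊆ C.filter (A w ·) ∪ Q.filter (A w ·) := fun v hv => by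
    have hwv := (mem_filter.mp hv).2
    by_cases hvC : v ∈ Set.range c
    · exact mem_union_left _ (mem_filter.mpr ⟨by simpa [C] using hvC, hwv⟩)
    · exact mem_union_right _ (mem_filter.mpr ⟨hsink w hw v ⟨hwv, hvC⟩, hwv⟩)
  have hin : univ.filter (A · w) ⊆ C.filter (A · w) ∪ Q.filter (A · w) ∪ (C ∪ Q)ᶜ := fun v hv => by
    have hvw := (mem_filter.mp hv).2
    by_cases hvCQ : v ∈ C ∪ Q
    · rcases mem_union.mp hvCQ with hvC | hvQ
      · exact mem_union_left _ (mem_union_left _ (mem_filter.mpr ⟨hvC, hvw⟩))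
      · exact mem_union_left _ (mem_union_right _ (mem_filter.mpr ⟨hvQ, hvw⟩))
    · exact mem_union_right _ (mem_compl.mpr hvCQ)
  have := (card_le_card hout).trans (card_union_le _ _)
  have := ((card_le_card hin).trans (card_union_le _ _)).trans
    (Nat.add_le_add_right (card_union_le _ _) _)
  rw [card_compl, card_union_of_disjoint hCQ, hC] at this
  unfold outDeg inDeg at hdeg
  omega

theorem card_le_card_filter_add_card_filter (hc : IsLongestDCycle A c) {w : V} (hw : w ∈ Q)
    (hdeg : Fintype.card V ≤ outDeg A w + inDeg A w) :
    Q.card ≤ (Q.filter (A w ·)).card + (Q.filter (A · w)).card := by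
  have := card_le_degree_split hQc hsink hc.1.1 hw hdeg
  have := hc.card_inIndices_add_card_outIndices_le (hQc w hw)
  have := card_add_card_le hQc hc.1.1
  omega

theorem le_card_inIndices_add_card_outIndices (hc : Function.Injective c) (hloop : ∀ v, ¬ A v v)
    {w : V} (hw : w ∈ Q) (hdeg : Fintype.card V ≤ outDeg A w + inDeg A w) :
    l + 2 ≤ (inIndices A c w).card + (outIndices A c w).card + Q.card := by
  have hloopQ : ∀ (p : V → Prop) [DecidablePred p], (∀ v, p v → v ≠ w) →
      (Q.filter p).card ≤ Q.card - 1 := fun p _ hp =>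
    (card_le_card (s := Q.filter p) fun v hv =>
      mem_erase.mpr ⟨hp v (mem_filter.mp hv).2, (mem_filter.mp hv).1⟩).trans_eq
        (card_erase_of_mem hw)
  have := hloopQ (A w ·) fun v hwv hvw => hloop w (hvw ▸ hwv)
  have := hloopQ (A · w) fun v hvw hvw' => hloop w (hvw' ▸ hvw)
  have := card_le_degree_split hQc hsink hc hw hdeg
  have := card_add_card_le hQc hc
  have := card_pos.mpr ⟨w, hw⟩
  omega

variable {q : ℕ} [NeZero q] {d : ZMod q → V} (hd : IsDCycle A d)
  (hdQ : ∀ v, v ∈ Q ↔ v ∈ Set.range d)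
include hd hdQ

omit [Fintype V] [DecidableEq V] hsink in
theorem card_outIndices_add_min_le_of_inIndices_succ (hc : IsLongestDCycle A c) (j : ZMod q)
    (hj : 1 ≤ (inIndices A c (d (j + 1))).card) :
    (outIndices A c (d j)).card + min l ((inIndices A c (d (j + 1))).card + q - 1) ≤ l :=
  hc.card_outIndices_add_min_le (nodup_cycleSegment hd.1 le_rfl)
    (isChain_cycleSegment hd.2)
    (fun v hv => hQc v ((hdQ v).mpr (mem_range_of_mem_cycleSegment hv)))
    (head?_cycleSegment (NeZero.pos q))
    (by simp [getLast?_cycleSegment (NeZero.pos q), Nat.cast_sub NeZero.one_le])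
    (card_pos.mp hj) NeZero.one_le (by simp) (hc.2 q d hd)

theorem exists_one_le_card_inIndices (hc : IsLongestDCycle A c) (hloop : ∀ v, ¬ A v v)
    (hstrong : ∀ u v, ReflTransGen A u v) (hdeg : ∀ v, Fintype.card V ≤ outDeg A v + inDeg A v)
    (hq : Q.card = q) : ∃ j, 1 ≤ (inIndices A c (d j)).card := by
  obtain ⟨_, ⟨i, rfl⟩, P, _, hz, hnd, hPav, hch⟩ := (hstrong (c 0) (d 0)).exists_ear
    (X := Set.range c) (Y := Q) ⟨0, rfl⟩ ((hdQ _).mpr ⟨0, rfl⟩) hQc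
  obtain ⟨e, rfl⟩ := (hdQ _).mp hz
  obtain ⟨hin, hch⟩ := List.isChain_cons.mp hch
  obtain ⟨x, hx⟩ : ∃ x, (P ++ [d e]).head? = some x := Option.ne_none_iff_exists'.mp (by simp)
  -- Continued once around `Q`, the ear has `≥ q` vertices, so its last vertex `d (e - 1)` has at
  -- most `l - q` out-neighbours on `C` and hence, by the degree bound, an in-neighbour there.
  set E := P ++ cycleSegment d e q
  have hEx : E.head? = some x := by
    rw [← hx]
    simp [E, List.head?_append, head?_cycleSegment (NeZero.pos q)]
  have hEy : E.getLast? = some (d (e - 1)) := by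
    simp [E, List.getLast?_append, getLast?_cycleSegment (NeZero.pos q), Nat.cast_sub NeZero.one_le,
      sub_eq_add_neg]
  have hEnd : E.Nodup := List.nodup_append.mpr ⟨hnd, nodup_cycleSegment hd.1 le_rfl,
    fun a ha b hb hab => (hPav a ha).2 (hab ▸ (hdQ b).mpr (mem_range_of_mem_cycleSegment hb))⟩
  have hEch : E.IsChain A := hch.left_of_append.append (isChain_cycleSegment hd.2)
    (by simpa [head?_cycleSegment (NeZero.pos q)] using (List.isChain_append.mp hch).2.2)
  have hEc : ∀ v ∈ E, v ∉ Set.range c := fun v hv => (List.mem_append.mp hv).elim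
    (fun hvP => (hPav v hvP).1) fun hvS => hQc v ((hdQ v).mpr (mem_range_of_mem_cycleSegment hvS))
  have hix : 1 ≤ (inIndices A c x).card :=
    card_pos.mpr ⟨i, mem_filter.mpr ⟨mem_univ _, hin x (by simpa using hx)⟩⟩
  have hql := hc.2 q d hd
  have := hc.card_outIndices_add_min_le hEnd hEch hEc hEx hEy (card_pos.mp hix) NeZero.one_le
    (by simp [E]) hql
  have := le_card_inIndices_add_card_outIndices hQc hsink hc.1.1 hloop
    ((hdQ _).mpr ⟨e - 1, rfl⟩) (hdeg _)
  exact ⟨e - 1, by omega⟩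

omit [Fintype V] [DecidableEq V] [NeZero q] hd in
theorem exists_one_le_card_outIndices (hstrong : ∀ u v, ReflTransGen A u v) :
    ∃ j, 1 ≤ (outIndices A c (d j)).card := by
  obtain ⟨u, hu, v, hv, huv, -⟩ := (hstrong (d 0) (c 0)).exists_last_exit (X := Q)
    ((hdQ _).mpr ⟨0, rfl⟩) fun h => hQc _ h ⟨0, rfl⟩
  obtain ⟨i, rfl⟩ : v ∈ Set.range c := by_contra fun h => hv (hsink u hu v ⟨huv, h⟩)
  obtain ⟨j, rfl⟩ := (hdQ u).mp hu
  exact ⟨j, card_pos.mpr ⟨i, mem_filter.mpr ⟨mem_univ _, huv⟩⟩⟩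

theorem false_of_isDCycle_sink (hc : IsLongestDCycle A c) (hloop : ∀ v, ¬ A v v)
    (hstrong : ∀ u v, ReflTransGen A u v) (hdeg : ∀ v, Fintype.card V ≤ outDeg A v + inDeg A v)
    (hq : Q.card = q) : False := by
  obtain ⟨j, hj⟩ := exists_one_le_card_outIndices hQc hsink hdQ hstrong
  have := ZMod.eq_zero_of_forall_le_add (hc.2 q d hd) (fun j => (inIndices A c (d j)).card)
    (fun j => (outIndices A c (d j)).card)
    (fun j => hq ▸ le_card_inIndices_add_card_outIndices hQc hsink hc.1.1 hloop
      ((hdQ _).mpr ⟨j, rfl⟩) (hdeg _))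
    (card_outIndices_add_min_le_of_inIndices_succ hQc hd hdQ hc)
    (exists_one_le_card_inIndices hQc hsink hd hdQ hc hloop hstrong hdeg hq) j
  omega

end SinkComponent

theorem dHamiltonian_of_isDCycle [Fintype V] [DecidableEq V] {A : V → V → Prop}
    (hn : 2 ≤ Fintype.card V) {c : ZMod (Fintype.card V) → V} (hc : IsDCycle A c) :
    DHamiltonian A := by
  have : Fact (1 < Fintype.card V) := ⟨hn⟩
  have hbij : Function.Bijective c := ⟨hc.1, hc.surjective⟩
  set e := Equiv.ofBijective c hbij
  set σ := e.permCongr (Equiv.addRight 1)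
  have hσ : ∀ i, σ (c i) = c (i + 1) := fun i => by
    simp [σ, e]
  have hpow : ∀ k : ℕ, (σ ^ k) (c 0) = c k := fun k => by
    induction k with
    | zero => simp
    | succ k ih => rw [pow_succ', Equiv.Perm.mul_apply, ih, hσ, Nat.cast_succ]
  have hmoved : ∀ v, σ v ≠ v := fun v => by
    obtain ⟨i, rfl⟩ := e.surjective v
    simpa [e, hσ] using fun h => one_ne_zero (add_eq_left.mp (hc.1 h))
  refine ⟨σ, ⟨c 0, hmoved _, fun v _ => ?_⟩, eq_univ_of_forall fun v => by simpa using hmoved v,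
    fun v => ?_⟩
  · obtain ⟨i, rfl⟩ := e.surjective v
    refine ⟨(i.val : ℕ), ?_⟩
    rw [zpow_natCast]
    simpa [e] using hpow i.val
  · obtain ⟨i, rfl⟩ := e.surjective v
    simpa [e, hσ] using hc.2 i

universe u

theorem exists_isDCycle_of_card_le_degree (n : ℕ) :
    ∀ {V : Type u} [Fintype V] [DecidableEq V] (A : V → V → Prop) [DecidableRel A],
      Fintype.card V = n → Nonempty V → (∀ v, ¬ A v v) → (∀ u v, ReflTransGen A u v) →
      (∀ v, Fintype.card V ≤ outDeg A v + inDeg A v) →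
      ∃ c : ZMod (Fintype.card V) → V, IsDCycle A c := by
  induction n using Nat.strong_induction_on with
  | _ n ih =>
  intro V _ _ A _ hn hne hloop hstrong hdeg
  obtain ⟨u, w, huw⟩ : ∃ u w, A u w := by
    by_contra! h
    exact Fintype.card_ne_zero (α := V) (by simpa [outDeg, inDeg, h] using hdeg hne.some)
  obtain ⟨l, hl, c, hc⟩ :=
    exists_isLongestDCycle (exists_isDCycle_of_rel_of_reflTransGen huw (hstrong w u))
  have : NeZero l := ⟨hl.ne'⟩
  rcases hc.1.le_card.eq_or_lt with hln | hln
  · rw [← hln]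
    exact ⟨c, hc.1⟩
  exfalso
  obtain ⟨v, hv⟩ : ∃ v, v ∉ Set.range c := by
    by_contra! h
    have := Fintype.card_le_of_surjective c h
    rw [ZMod.card] at this
    omega
  obtain ⟨Q, ⟨u₀, hu₀⟩, hQc, hsink, hQstrong⟩ := exists_sink_component (A := A) hv
  have : Nonempty Q := ⟨⟨u₀, hu₀⟩⟩
  obtain ⟨d₀, hd₀⟩ := ih Q.card (by have := card_add_card_le hQc hc.1.1; omega)
    (A := fun u v : Q => A u v) (Fintype.card_coe Q) this (fun v => hloop v)
    hQstrong fun v => by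
      rw [outDeg_subtype, inDeg_subtype, Fintype.card_coe]
      exact card_le_card_filter_add_card_filter hQc hsink hc v.2 (hdeg v)
  have : NeZero (Fintype.card Q) := ⟨Fintype.card_ne_zero⟩
  exact false_of_isDCycle_sink hQc hsink (d := fun j => d₀ j)
    ⟨Subtype.val_injective.comp hd₀.1, hd₀.2⟩
    (fun v => ⟨fun hv => (hd₀.surjective ⟨v, hv⟩).imp fun _ h => congrArg Subtype.val h,
      fun ⟨j, hj⟩ => hj ▸ (d₀ j).2⟩)
    hc hloop hstrong hdeg (Fintype.card_coe Q).symm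

end

/-- Ghouila-Houri: a strongly connected digraph on `n > 2` vertices with
`d⁺(v) + d⁻(v) ≥ n` for every vertex is Hamiltonian. -/
theorem stmt_3 {V : Type*} [Fintype V] [DecidableEq V] (A : V → V → Prop) [DecidableRel A]
    (hloopless : ∀ v, ¬ A v v)
    (hn : 2 < Fintype.card V)
    (hstrong : ∀ u v : V, Relation.ReflTransGen A u v)
    (hdeg : ∀ v, Fintype.card V ≤ outDeg A v + inDeg A v) :
    DHamiltonian A := by
  obtain ⟨c, hc⟩ := exists_isDCycle_of_card_le_degree _ A rfl
    (Fintype.card_pos_iff.mp (by omega)) hloopless hstrong hdeg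
  exact dHamiltonian_of_isDCycle hn.le hc
end

section
/- Let G be a balanced bipartite graph with parts X, Y of size n each. If for every pair of nonadjacent vertices u ∈ X, v ∈ Y one has d(u) + d(v) ≥ n, then G contains a perfect matching. -/
/-!
If Hall's condition failed for some `A ⊆ X`, then `|N(A)| < |A|`, so some `b ∈ Y` has no
neighbour in `A`; for any `a ∈ A` this gives `d(a) ≤ |N(A)| < |A|` and `d(b) ≤ n - |A|`,
contradicting `d(a) + d(b) ≥ n`. Hall's theorem then yields an injection `X → Y` along edges,
which is a bijection since `|X| = |Y|`, and its graph is a perfect matching.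
-/

open Finset Sum

theorem Fintype.exists_injective_of_card_le_card_filter_add_card_filter {α β : Type*}
    [Fintype α] [Fintype β] (r : α → β → Prop) [DecidableRel r]
    (hcard : Fintype.card α ≤ Fintype.card β)
    (hr : ∀ a b, ¬ r a b → Fintype.card α ≤ #{b' | r a b'} + #{a' | r a' b}) :
    ∃ f : α → β, Function.Injective f ∧ ∀ a, r a (f a) := by
  classical
  refine (Fintype.all_card_le_filter_rel_iff_exists_injective r).mp fun A => ?_
  by_contra! hlt
  set N : Finset β := {b | ∃ a ∈ A, r a b}
  obtain ⟨a, ha⟩ : A.Nonempty := by rw [← Finset.card_pos]; omega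
  obtain ⟨b, -, hb⟩ : ∃ b ∈ univ, b ∉ N :=
    exists_mem_notMem_of_card_lt_card (by have := card_le_univ A; rw [card_univ]; omega)
  have hrow : #{b' | r a b'} ≤ #N :=
    card_le_card fun b' hb' => mem_filter.mpr ⟨mem_univ _, a, ha, (mem_filter.mp hb').2⟩
  have hcol : #{a' | r a' b} ≤ #Aᶜ :=
    card_le_card fun a' ha' => mem_compl.mpr fun ha'A =>
      hb (mem_filter.mpr ⟨mem_univ _, a', ha'A, (mem_filter.mp ha').2⟩)
  have hab := hr a b fun h => hb (mem_filter.mpr ⟨mem_univ _, a, ha, h⟩)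
  rw [card_compl] at hcol
  have := card_le_univ A
  omega

namespace SimpleGraph

variable {α β : Type*} {G : SimpleGraph (α ⊕ β)}

theorem exists_isPerfectMatching_of_equiv (e : α ≃ β) (he : ∀ a, G.Adj (inl a) (inr (e a))) :
    ∃ M : G.Subgraph, M.IsPerfectMatching := by
  let f : Set.range (inl : α → α ⊕ β) ≃ Set.range (inr : β → α ⊕ β) :=
    (Equiv.ofInjective _ inl_injective).symm.trans (e.trans (Equiv.ofInjective _ inr_injective))
  obtain ⟨M, hverts, hM⟩ := Subgraph.IsMatching.exists_of_disjoint_sets_of_equiv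
    Set.isCompl_range_inl_range_inr.disjoint f (by
      rintro ⟨_, a, rfl⟩
      simpa [f] using he a)
  exact ⟨M, hM, Subgraph.isSpanning_iff.mpr
    (hverts.trans Set.isCompl_range_inl_range_inr.sup_eq_top)⟩

variable [Fintype α] [Fintype β] [DecidableRel G.Adj]

theorem degree_inl_eq_card_filter (hG : G ≤ completeBipartiteGraph α β) (a : α) :
    G.degree (inl a) = #{b | G.Adj (inl a) (inr b)} := by
  have : G.neighborFinset (inl a) = ({b | G.Adj (inl a) (inr b)} : Finset β).map .inr := by
    ext (a' | b)
    · simpa using fun h => by simpa using hG h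
    · simp
  rw [← card_neighborFinset_eq_degree, this, card_map]

theorem degree_inr_eq_card_filter (hG : G ≤ completeBipartiteGraph α β) (b : β) :
    G.degree (inr b) = #{a | G.Adj (inl a) (inr b)} := by
  have : G.neighborFinset (inr b) = ({a | G.Adj (inl a) (inr b)} : Finset α).map .inl := by
    ext (a | b')
    · simp [adj_comm]
    · simpa using fun h => by simpa using hG h
  rw [← card_neighborFinset_eq_degree, this, card_map]

end SimpleGraph

variable {α β : Type*} [Fintype α] [Fintype β]

theorem stmt_6_general (n : ℕ)
    (hα : Fintype.card α = n) (hβ : Fintype.card β = n)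
    (G : SimpleGraph (α ⊕ β)) [DecidableRel G.Adj]
    (hbip : ∀ x y, G.Adj x y → (x.isLeft ∧ y.isRight) ∨ (x.isRight ∧ y.isLeft))
    (hdeg : ∀ (a : α) (b : β), ¬ G.Adj (Sum.inl a) (Sum.inr b) →
      n ≤ G.degree (Sum.inl a) + G.degree (Sum.inr b)) :
    ∃ M : G.Subgraph, M.IsPerfectMatching := by
  have hG : G ≤ completeBipartiteGraph α β := hbip
  obtain ⟨f, hf_inj, hf_adj⟩ :=
    Fintype.exists_injective_of_card_le_card_filter_add_card_filter
      (fun a b => G.Adj (inl a) (inr b)) (by omega) fun a b hab => by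
        simpa only [hα, ← G.degree_inl_eq_card_filter hG, ← G.degree_inr_eq_card_filter hG]
          using hdeg a b hab
  have hf_bij : f.Bijective :=
    (Fintype.bijective_iff_injective_and_card f).mpr ⟨hf_inj, hα.trans hβ.symm⟩
  exact G.exists_isPerfectMatching_of_equiv (.ofBijective f hf_bij) hf_adj

/-- A balanced bipartite graph with parts of size `n` in which every pair of
nonadjacent vertices `u ∈ X`, `v ∈ Y` satisfies `d(u) + d(v) ≥ n` has a perfect
matching. -/
theorem stmt_6 (n : ℕ) (hn : 1 ≤ n)
    (hα : Fintype.card α = n) (hβ : Fintype.card β = n)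
    (G : SimpleGraph (α ⊕ β)) [DecidableRel G.Adj]
    (hbip : ∀ x y, G.Adj x y → (x.isLeft ∧ y.isRight) ∨ (x.isRight ∧ y.isLeft))
    (hdeg : ∀ (a : α) (b : β), ¬ G.Adj (Sum.inl a) (Sum.inr b) →
      n ≤ G.degree (Sum.inl a) + G.degree (Sum.inr b)) :
    ∃ M : G.Subgraph, M.IsPerfectMatching :=
  stmt_6_general n hα hβ G hbip hdeg
end

section
/- Let G be a balanced bipartite graph with parts X, Y of size n each, n > 1. If for every pair of nonadjacent vertices u ∈ X, v ∈ Y one has d(u) + d(v) ≥ n + 2, then G contains at least two disjoint perfect matchings. -/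
/-!
If a set `S` of left vertices had `|N(S)| < |S|`, then any `u ∈ S` and `v ∉ N(S)` would be
nonadjacent with `d(u) ≤ |N(S)|` and `d(v) ≤ n - |S|`, so `d(u) + d(v) < n`. Hence an Ore-type
condition with bound `n` already gives Hall's condition and a first perfect matching `f`.
Deleting the edges of `f` lowers every degree by at most one, so the remaining graph satisfies the
bound `n` for all nonadjacent pairs except the pairs `(u, f u)`. As `n ≥ 2`, every deficient `S`
still contains some `u` with a `v ∉ N(S)` different from `f u`, so Hall's condition holds again and
yields a second perfect matching avoiding `f`.
-/

open Finset Function Sum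

section Ore

variable {X Y : Type*} [Fintype X] [Fintype Y] [DecidableEq Y] {R : X → Y → Prop} [DecidableRel R]

theorem card_add_card_lt_of_card_biUnion_lt {S : Finset X}
    (hS : #(S.biUnion fun a => {b | R a b}) < #S) {u : X} {v : Y} (hu : u ∈ S)
    (hv : v ∉ S.biUnion fun a => {b | R a b}) :
    #{b | R u b} + #{a | R a v} < Fintype.card X := by
  classical
  have hu_le : #{b | R u b} ≤ #(S.biUnion fun a => {b | R a b}) :=
    card_le_card fun b hb => mem_biUnion.mpr ⟨u, hu, hb⟩
  have hv_le : #{a | R a v} ≤ #Sᶜ := card_le_card fun a ha => by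
    refine mem_compl.mpr fun haS => hv (mem_biUnion.mpr ⟨a, haS, ?_⟩)
    simpa using (mem_filter.mp ha).2
  have := S.card_le_univ
  rw [card_compl] at hv_le
  omega

theorem card_le_card_biUnion_of_ore (hcard : Fintype.card X ≤ Fintype.card Y)
    (hR : ∀ u v, ¬R u v → Fintype.card X ≤ #{b | R u b} + #{a | R a v}) (S : Finset X) :
    #S ≤ #(S.biUnion fun a => {b | R a b}) := by
  by_contra! hS
  set T := S.biUnion fun a => {b | R a b}
  obtain ⟨u, hu⟩ : S.Nonempty := card_pos.mp (by omega)
  obtain ⟨v, -, hv⟩ := exists_mem_notMem_of_card_lt_card (s := T) (t := univ)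
    (by rw [card_univ]; have := S.card_le_univ; omega)
  have huv : ¬R u v := fun h => hv (mem_biUnion.mpr ⟨u, hu, by simpa using h⟩)
  have := card_add_card_lt_of_card_biUnion_lt hS hu hv
  have := hR u v huv
  omega

theorem card_le_card_biUnion_of_ore_off_graph {f : X → Y} (hf : Injective f)
    (hY : 1 < Fintype.card Y) (hcard : Fintype.card X ≤ Fintype.card Y)
    (hR : ∀ u v, ¬R u v → v ≠ f u → Fintype.card X ≤ #{b | R u b} + #{a | R a v})
    (S : Finset X) :
    #S ≤ #(S.biUnion fun a => {b | R a b}) := by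
  by_contra! hS
  set T := S.biUnion fun a => {b | R a b}
  obtain ⟨u, hu, v, hv, hvu⟩ : ∃ u ∈ S, ∃ v ∉ T, v ≠ f u := by
    by_cases hS1 : 1 < #S
    · obtain ⟨v, -, hv⟩ := exists_mem_notMem_of_card_lt_card (s := T) (t := univ)
        (by rw [card_univ]; have := S.card_le_univ; omega)
      obtain ⟨_, hw, hwv⟩ := exists_mem_ne (by rwa [card_image_of_injective S hf]) v
      obtain ⟨u, hu, rfl⟩ := mem_image.mp hw
      exact ⟨u, hu, v, hv, hwv.symm⟩
    · obtain ⟨u, rfl⟩ := card_eq_one.mp (by omega : #S = 1)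
      obtain ⟨v, hv⟩ := Fintype.exists_ne_of_one_lt_card hY (f u)
      exact ⟨u, mem_singleton_self u, v, fun h => by simp_all [T], hv⟩
  have huv : ¬R u v := fun h => hv (mem_biUnion.mpr ⟨u, hu, by simpa using h⟩)
  have := card_add_card_lt_of_card_biUnion_lt hS hu hv
  have := hR u v huv hvu
  omega

theorem exists_injective_of_ore (hcard : Fintype.card X ≤ Fintype.card Y)
    (hR : ∀ u v, ¬R u v → Fintype.card X ≤ #{b | R u b} + #{a | R a v}) :
    ∃ f : X → Y, Injective f ∧ ∀ a, R a (f a) := by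
  obtain ⟨f, hf, hfR⟩ := (all_card_le_biUnion_card_iff_exists_injective _).mp
    (card_le_card_biUnion_of_ore hcard hR)
  exact ⟨f, hf, fun a => by simpa using hfR a⟩

theorem exists_injective_ne_of_ore (hY : 1 < Fintype.card Y)
    (hcard : Fintype.card X ≤ Fintype.card Y)
    (hR : ∀ u v, ¬R u v → Fintype.card X + 2 ≤ #{b | R u b} + #{a | R a v})
    {f : X → Y} (hf : Injective f) :
    ∃ g : X → Y, Injective g ∧ ∀ a, R a (g a) ∧ g a ≠ f a := by
  have hR' : ∀ u v, ¬(R u v ∧ v ≠ f u) → v ≠ f u →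
      Fintype.card X ≤ #{b | R u b ∧ b ≠ f u} + #{a | R a v ∧ v ≠ f a} := by
    intro u v huv hvu
    have hu : #{b | R u b} ≤ #{b | R u b ∧ b ≠ f u} + 1 := by
      refine (card_le_card fun b hb => ?_).trans (card_insert_le (f u) _)
      by_cases h : b = f u <;> simp_all
    have hv : #{a | R a v} ≤ #{a | R a v ∧ v ≠ f a} + 1 := by
      classical
      have hfv : #{a | v = f a} ≤ 1 :=
        card_le_one.mpr fun a ha a' ha' => hf (by simp_all)
      calc #{a | R a v} ≤ #{a | (R a v ∧ v ≠ f a) ∨ v = f a} :=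
            card_le_card fun a ha => by by_cases h : v = f a <;> simp_all
        _ ≤ #{a | R a v ∧ v ≠ f a} + #{a | v = f a} := by
            rw [filter_or]; exact card_union_le _ _
        _ ≤ #{a | R a v ∧ v ≠ f a} + 1 := by omega
    have := hR u v (fun h => huv ⟨h, hvu⟩)
    omega
  obtain ⟨g, hg, hgR⟩ := (all_card_le_biUnion_card_iff_exists_injective _).mp
    (card_le_card_biUnion_of_ore_off_graph hf hY hcard hR')
  exact ⟨g, hg, fun a => by simpa using hgR a⟩

end Ore

namespace SimpleGraph

variable {X Y : Type*} (G : SimpleGraph (X ⊕ Y))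

def matchingOf (f : X → Y) (hf : ∀ a, G.Adj (inl a) (inr (f a))) : G.Subgraph :=
  ⨆ a, G.subgraphOfAdj (hf a)

variable {G}

theorem edgeSet_matchingOf {f : X → Y} (hf : ∀ a, G.Adj (inl a) (inr (f a))) :
    (G.matchingOf f hf).edgeSet = Set.range fun a => s(inl a, inr (f a)) := by
  rw [matchingOf, Subgraph.edgeSet_iSup, Set.range_eq_iUnion]
  simp only [edgeSet_subgraphOfAdj]

theorem isPerfectMatching_matchingOf {f : X → Y} (hf : ∀ a, G.Adj (inl a) (inr (f a)))
    (hbij : Bijective f) : (G.matchingOf f hf).IsPerfectMatching := by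
  refine ⟨Subgraph.IsMatching.iSup (fun a => .subgraphOfAdj (hf a)) fun a a' hne => ?_, ?_⟩
  · simp [hne.symm, hbij.injective.ne hne.symm]
  · rw [Subgraph.isSpanning_iff, matchingOf, Subgraph.verts_iSup, Set.eq_univ_iff_forall]
    rintro (a | b)
    · exact Set.mem_iUnion.mpr ⟨a, by simp⟩
    · obtain ⟨a, rfl⟩ := hbij.surjective b
      exact Set.mem_iUnion.mpr ⟨a, by simp⟩

theorem disjoint_edgeSet_matchingOf {f g : X → Y} (hf : ∀ a, G.Adj (inl a) (inr (f a)))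
    (hg : ∀ a, G.Adj (inl a) (inr (g a))) (hfg : ∀ a, f a ≠ g a) :
    Disjoint (G.matchingOf f hf).edgeSet (G.matchingOf g hg).edgeSet := by
  rw [edgeSet_matchingOf, edgeSet_matchingOf, Set.disjoint_range_iff]
  intro a a' h
  obtain ⟨ha, hb⟩ | ⟨h, -⟩ := Sym2.eq_iff.mp h
  · obtain rfl := inl_injective ha
    exact hfg a (inr_injective hb)
  · exact inl_ne_inr h

theorem degree_inl_eq_card [Fintype X] [Fintype Y] [DecidableRel G.Adj]
    (hX : ∀ a a', ¬G.Adj (inl a) (inl a')) (a : X) :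
    G.degree (inl a) = #{b | G.Adj (inl a) (inr b)} := by
  rw [← card_neighborFinset_eq_degree, neighborFinset_eq_filter, card_filter,
    Fintype.sum_sum_type, card_filter]
  simp [hX]

theorem degree_inr_eq_card [Fintype X] [Fintype Y] [DecidableRel G.Adj]
    (hY : ∀ b b', ¬G.Adj (inr b) (inr b')) (b : Y) :
    G.degree (inr b) = #{a | G.Adj (inl a) (inr b)} := by
  rw [← card_neighborFinset_eq_degree, neighborFinset_eq_filter, card_filter,
    Fintype.sum_sum_type, card_filter]
  simp [hY, G.adj_comm]

end SimpleGraph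

open SimpleGraph

variable {α β : Type*} [Fintype α] [Fintype β]

/-- A balanced bipartite graph with parts of size `n > 1` in which every pair of
nonadjacent vertices `u ∈ X`, `v ∈ Y` satisfies `d(u) + d(v) ≥ n + 2` contains two
disjoint perfect matchings. -/
theorem stmt_7 (n : ℕ) (hn : 1 < n)
    (hα : Fintype.card α = n) (hβ : Fintype.card β = n)
    (G : SimpleGraph (α ⊕ β)) [DecidableRel G.Adj]
    (hbip : ∀ x y, G.Adj x y → (x.isLeft ∧ y.isRight) ∨ (x.isRight ∧ y.isLeft))
    (hdeg : ∀ (a : α) (b : β), ¬ G.Adj (Sum.inl a) (Sum.inr b) →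
      n + 2 ≤ G.degree (Sum.inl a) + G.degree (Sum.inr b)) :
    ∃ M₁ M₂ : G.Subgraph, M₁.IsPerfectMatching ∧ M₂.IsPerfectMatching ∧
      Disjoint M₁.edgeSet M₂.edgeSet := by
  classical
  have hX : ∀ a a', ¬G.Adj (inl a) (inl a') := fun a a' h => by simpa using hbip _ _ h
  have hY : ∀ b b', ¬G.Adj (inr b) (inr b') := fun b b' h => by simpa using hbip _ _ h
  have hcard : Fintype.card α ≤ Fintype.card β := hα.trans_le hβ.ge
  have hR (a : α) (b : β) (hab : ¬G.Adj (inl a) (inr b)) : Fintype.card α + 2 ≤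
      #{b' | G.Adj (inl a) (inr b')} + #{a' | G.Adj (inl a') (inr b)} := by
    rw [← G.degree_inl_eq_card hX, ← G.degree_inr_eq_card hY, hα]
    exact hdeg a b hab
  obtain ⟨f, hf, hfG⟩ := exists_injective_of_ore hcard fun a b h => (hR a b h).trans' (by omega)
  obtain ⟨g, hg, hgG⟩ := exists_injective_ne_of_ore (by omega) hcard hR hf
  have hbij {h : α → β} (hh : Injective h) : Bijective h :=
    (Fintype.bijective_iff_injective_and_card h).mpr ⟨hh, by omega⟩
  exact ⟨G.matchingOf f hfG, G.matchingOf g fun a => (hgG a).1,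
    isPerfectMatching_matchingOf _ (hbij hf), isPerfectMatching_matchingOf _ (hbij hg),
    disjoint_edgeSet_matchingOf _ _ fun a => (hgG a).2.symm⟩
end

section
/- Let D be a strongly connected digraph on n > 2 vertices whose Z-mapping graph G satisfies: every vertex of G has degree greater than n/2. Then D contains two arc-disjoint spanning subdigraphs each of which is a cycle factor. -/
open Finset Equiv Fintype

section ZmapDegree

variable {V : Type*} [Fintype V] (A : V → V → Prop) [DecidableRel A]

theorem ncard_neighborSet_Zmap_inl (v : V) :
    ((Zmap A).neighborSet (.inl v)).ncard = outDeg A v := by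
  have : (Zmap A).neighborSet (.inl v) = Sum.inr '' {w | A v w} := by
    ext (x | w) <;> simp [Zmap]
  rw [this, Set.ncard_image_of_injective _ Sum.inr_injective, Set.ncard_eq_toFinset_card']
  simp [outDeg]

theorem ncard_neighborSet_Zmap_inr (w : V) :
    ((Zmap A).neighborSet (.inr w)).ncard = inDeg A w := by
  have : (Zmap A).neighborSet (.inr w) = Sum.inl '' {v | A v w} := by
    ext (v | x) <;> simp [Zmap]
  rw [this, Set.ncard_image_of_injective _ Sum.inl_injective, Set.ncard_eq_toFinset_card']
  simp [inDeg]

end ZmapDegree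

section PerfectMatching

variable {V : Type*} [Fintype V] [DecidableEq V]

theorem exists_perm_iff_hall (R : V → V → Prop) [DecidableRel R] :
    (∃ σ : Perm V, ∀ v, R v (σ v)) ↔
      ∀ s : Finset V, #s ≤ #(s.biUnion fun v => univ.filter fun w => R v w) := by
  rw [all_card_le_biUnion_card_iff_exists_injective]
  constructor
  · rintro ⟨σ, hσ⟩
    exact ⟨σ, σ.injective, by simpa using hσ⟩
  · rintro ⟨f, hf, hfR⟩
    exact ⟨ofBijective f (Finite.injective_iff_bijective.mp hf), by simpa using hfR⟩

theorem filter_subset_compl_of_notMem_biUnion {R : V → V → Prop} [DecidableRel R]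
    {s : Finset V} {w : V} (hw : w ∉ s.biUnion fun v => univ.filter fun u => R v u) :
    (univ.filter fun u => R u w) ⊆ sᶜ :=
  fun u hu => mem_compl.mpr fun hus => hw (mem_biUnion.mpr ⟨u, hus, by simpa using hu⟩)

theorem exists_perm_of_card_le_outDeg_add_inDeg {R : V → V → Prop} [DecidableRel R]
    (h : ∀ v w, card V ≤ outDeg R v + inDeg R w) : ∃ σ : Perm V, ∀ v, R v (σ v) := by
  refine (exists_perm_iff_hall R).mpr fun s => ?_
  set N := s.biUnion fun v => univ.filter fun u => R v u
  by_contra! hN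
  obtain ⟨v, hv⟩ : s.Nonempty := card_pos.mp (by omega)
  have hs := card_le_univ s
  obtain ⟨w, -, hw⟩ := exists_mem_notMem_of_card_lt_card (s := N) (t := univ)
    (by rw [card_univ]; omega)
  have hout : outDeg R v ≤ #N :=
    card_le_card (subset_biUnion_of_mem (fun v => univ.filter fun u => R v u) hv)
  have hin : inDeg R w ≤ card V - #s :=
    card_compl s ▸ card_le_card (filter_subset_compl_of_notMem_biUnion hw)
  have := h v w
  omega

end PerfectMatching

section AvoidingMatching

variable {V : Type*} [Fintype V] [DecidableEq V] {A : V → V → Prop} [DecidableRel A]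
  {σ : Perm V}

theorem outDeg_avoiding_add_one (hσ : ∀ v, A v (σ v)) (v : V) :
    outDeg (fun v w => A v w ∧ w ≠ σ v) v + 1 = outDeg A v := by
  have : (univ.filter fun w => A v w ∧ w ≠ σ v) = (univ.filter fun w => A v w).erase (σ v) := by
    ext w; simp [and_comm]
  rw [outDeg, this, card_erase_add_one (by simpa using hσ v), outDeg]

theorem inDeg_avoiding_add_one (hσ : ∀ v, A v (σ v)) (w : V) :
    inDeg (fun v w => A v w ∧ w ≠ σ v) w + 1 = inDeg A w := by
  have : (univ.filter fun u => A u w ∧ w ≠ σ u) =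
      (univ.filter fun u => A u w).erase (σ.symm w) := by
    ext u; simp [and_comm, eq_symm_apply, eq_comm]
  rw [inDeg, this, card_erase_add_one (by simpa using hσ (σ.symm w)), inDeg]

theorem exists_split_of_not_exists_perm_avoiding
    (hout : ∀ v, card V < 2 * outDeg A v) (hin : ∀ w, card V < 2 * inDeg A w)
    (hσ : ∀ v, A v (σ v)) (hτ : ¬ ∃ τ : Perm V, ∀ v, A v (τ v) ∧ τ v ≠ σ v) :
    ∃ s N : Finset V, 2 * #s = card V + 1 ∧ (∀ v w, (v ∈ s ↔ w ∈ N) → A v w) ∧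
      ∀ v, v ∈ s ↔ σ v ∉ N := by
  set R : V → V → Prop := fun v w => A v w ∧ w ≠ σ v
  obtain ⟨s, hN⟩ : ∃ s : Finset V, #(s.biUnion fun v => univ.filter fun u => R v u) < #s := by
    simpa only [not_forall, not_le] using (exists_perm_iff_hall R).not.mp hτ
  set N := s.biUnion fun v => univ.filter fun u => R v u
  obtain ⟨v₀, hv₀⟩ : s.Nonempty := card_pos.mp (by omega)
  obtain ⟨w₀, -, hw₀⟩ := exists_mem_notMem_of_card_lt_card (s := N) (t := univ)
    (by have := card_le_univ s; rw [card_univ]; omega)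
  have hRout : ∀ v ∈ s, (univ.filter fun u => R v u) ⊆ N := fun v hv =>
    subset_biUnion_of_mem (fun v => univ.filter fun u => R v u) hv
  have hRin : ∀ w ∉ N, (univ.filter fun u => R u w) ⊆ sᶜ := fun w hw =>
    filter_subset_compl_of_notMem_biUnion hw
  have hRout_deg (v : V) : card V < 2 * (outDeg R v + 1) :=
    outDeg_avoiding_add_one hσ v ▸ hout v
  have hRin_deg (w : V) : card V < 2 * (inDeg R w + 1) :=
    inDeg_avoiding_add_one hσ w ▸ hin w
  have hout₀ : outDeg R v₀ ≤ #N := card_le_card (hRout v₀ hv₀)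
  have hin₀ : inDeg R w₀ ≤ card V - #s := card_compl s ▸ card_le_card (hRin w₀ hw₀)
  have hs : 2 * #s = card V + 1 := by
    have := card_le_univ s
    have := hRout_deg v₀
    have := hRin_deg w₀
    omega
  have hRout_eq : ∀ v ∈ s, (univ.filter fun u => R v u) = N := fun v hv =>
    eq_of_subset_of_card_le (hRout v hv) (by have := hRout_deg v; change #N ≤ outDeg R v; omega)
  have hRin_eq : ∀ w ∉ N, (univ.filter fun u => R u w) = sᶜ := fun w hw =>
    eq_of_subset_of_card_le (hRin w hw)
      (by have := hRin_deg w; rw [card_compl]; change _ ≤ inDeg R w; omega)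
  refine ⟨s, N, hs, fun v w hvw => ?_, fun v => ⟨fun hv hσv => ?_, fun hσv => ?_⟩⟩
  · by_cases hv : v ∈ s
    · have := hRout_eq v hv ▸ hvw.mp hv
      exact (mem_filter.mp this).2.1
    · have : v ∈ univ.filter fun u => R u w := hRin_eq w (mt hvw.mpr hv) ▸ mem_compl.mpr hv
      exact (mem_filter.mp this).2.1
  · have := hRout_eq v hv ▸ hσv
    exact (mem_filter.mp this).2.2 rfl
  · by_contra hv
    have : v ∈ univ.filter fun u => R u (σ v) := hRin_eq _ hσv ▸ mem_compl.mpr hv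
    exact (mem_filter.mp this).2.2 rfl

end AvoidingMatching

def pairSucc (m : ℕ) : Fin (m + 1) ⊕ Fin m → Fin (m + 1) ⊕ Fin m
  | .inl i => Fin.cases (.inl 0) .inr i
  | .inr j => .inl j.succ

def pairCastSucc (m : ℕ) : Fin (m + 1) ⊕ Fin m → Fin (m + 1) ⊕ Fin m
  | .inl i => Fin.lastCases (.inl (Fin.last m)) .inr i
  | .inr j => .inl j.castSucc

theorem pairSucc_involutive (m : ℕ) : Function.Involutive (pairSucc m) := by
  rintro (i | j)
  · cases i using Fin.cases <;> simp [pairSucc]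
  · simp [pairSucc]

theorem pairCastSucc_involutive (m : ℕ) : Function.Involutive (pairCastSucc m) := by
  rintro (i | j)
  · cases i using Fin.lastCases <;> simp [pairCastSucc]
  · simp [pairCastSucc]

theorem pairSucc_eq_self_or_isLeft_ne (m : ℕ) (x : Fin (m + 1) ⊕ Fin m) :
    pairSucc m x = x ∨ (pairSucc m x).isLeft ≠ x.isLeft := by
  rcases x with i | j
  · cases i using Fin.cases <;> simp [pairSucc]
  · simp [pairSucc]

theorem pairCastSucc_eq_self_or_isLeft_ne (m : ℕ) (x : Fin (m + 1) ⊕ Fin m) :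
    pairCastSucc m x = x ∨ (pairCastSucc m x).isLeft ≠ x.isLeft := by
  rcases x with i | j
  · cases i using Fin.lastCases <;> simp [pairCastSucc]
  · simp [pairCastSucc]

theorem pairSucc_ne_pairCastSucc {m : ℕ} (hm : m ≠ 0) (x : Fin (m + 1) ⊕ Fin m) :
    pairSucc m x ≠ pairCastSucc m x := by
  obtain ⟨k, rfl⟩ := Nat.exists_eq_succ_of_ne_zero hm
  rcases x with i | j
  · cases i using Fin.cases with
    | zero =>
      simp only [pairSucc, pairCastSucc, Fin.cases_zero]
      rw [← Fin.castSucc_zero, Fin.lastCases_castSucc]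
      simp
    | succ j =>
      cases j using Fin.lastCases with
      | last =>
        simp only [pairSucc, pairCastSucc, Fin.cases_succ]
        rw [Fin.succ_last, Fin.lastCases_last]
        simp
      | cast l =>
        simp only [pairSucc, pairCastSucc, Fin.succ_castSucc, Fin.lastCases_castSucc]
        simp [Fin.ext_iff]
  · simp [pairSucc, pairCastSucc, Fin.ext_iff]

theorem exists_perm_pair_crossing {V : Type*} [Fintype V] [DecidableEq V] (s : Finset V)
    (hs : 2 * #s = card V + 1) (hV : 2 < card V) :
    ∃ ρ₁ ρ₂ : Perm V, (∀ v, ρ₁ v = v ∨ (ρ₁ v ∈ s ↔ v ∉ s)) ∧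
      (∀ v, ρ₂ v = v ∨ (ρ₂ v ∈ s ↔ v ∉ s)) ∧ ∀ v, ρ₁ v ≠ ρ₂ v := by
  obtain ⟨m, hm⟩ : ∃ m, #s = m + 1 := ⟨#s - 1, by omega⟩
  let E : Fin (m + 1) ⊕ Fin m ≃ V :=
    (sumCongr (Finset.equivFinOfCardEq hm).symm
      (Fintype.equivFinOfCardEq (by rw [card_subtype_compl, card_coe]; omega)).symm).trans
      (sumCompl (· ∈ s))
  have hE : ∀ x, E x ∈ s ↔ x.isLeft := by
    rintro (i | j)
    · simp [E]
    · simpa [E] using ((Fintype.equivFinOfCardEq _).symm j : {v // v ∉ s}).prop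
  have transport : ∀ π : Perm (Fin (m + 1) ⊕ Fin m),
      (∀ x, π x = x ∨ (π x).isLeft ≠ x.isLeft) →
      ∀ v, E.permCongr π v = v ∨ (E.permCongr π v ∈ s ↔ v ∉ s) := by
    intro π hπ v
    obtain ⟨x, rfl⟩ := E.surjective v
    simp only [permCongr_apply, symm_apply_apply, hE, E.apply_eq_iff_eq]
    rcases hπ x with h | h
    · exact .inl h
    · right; revert h; cases (π x).isLeft <;> cases x.isLeft <;> simp
  refine ⟨E.permCongr (pairSucc_involutive m).toPerm,
    E.permCongr (pairCastSucc_involutive m).toPerm,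
    transport _ (pairSucc_eq_self_or_isLeft_ne m),
    transport _ (pairCastSucc_eq_self_or_isLeft_ne m), fun v => ?_⟩
  simp only [permCongr_apply, Function.Involutive.coe_toPerm]
  exact E.injective.ne (pairSucc_ne_pairCastSucc (by omega) _)

theorem stmt_15_general {V : Type*} [Fintype V] (A : V → V → Prop)
    (hn : 2 < Fintype.card V)
    (hdeg : ∀ x : V ⊕ V, Fintype.card V < 2 * ((Zmap A).neighborSet x).ncard) :
    ∃ σ₁ σ₂ : Equiv.Perm V, (∀ v, A v (σ₁ v)) ∧ (∀ v, A v (σ₂ v)) ∧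
      (∀ v, σ₁ v ≠ σ₂ v) := by
  classical
  have hout (v : V) : card V < 2 * outDeg A v := ncard_neighborSet_Zmap_inl A v ▸ hdeg (.inl v)
  have hin (w : V) : card V < 2 * inDeg A w := ncard_neighborSet_Zmap_inr A w ▸ hdeg (.inr w)
  obtain ⟨σ, hσ⟩ := exists_perm_of_card_le_outDeg_add_inDeg (R := A) fun v w => by
    have := hout v; have := hin w; omega
  by_cases hτ : ∃ τ : Perm V, ∀ v, A v (τ v) ∧ τ v ≠ σ v
  · obtain ⟨τ, hτ⟩ := hτ
    exact ⟨σ, τ, hσ, fun v => (hτ v).1, fun v => (hτ v).2.symm⟩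
  obtain ⟨s, N, hs, hA, hσN⟩ := exists_split_of_not_exists_perm_avoiding hout hin hσ hτ
  obtain ⟨ρ₁, ρ₂, hρ₁, hρ₂, hρ⟩ := exists_perm_pair_crossing s hs hn
  have hAρ (ρ : Perm V) (hρ : ∀ v, ρ v = v ∨ (ρ v ∈ s ↔ v ∉ s)) (v : V) : A v (σ (ρ v)) := by
    rcases hρ v with h | h
    · rw [h]; exact hσ v
    · exact hA _ _ (by have := hσN (ρ v); tauto)
  exact ⟨ρ₁.trans σ, ρ₂.trans σ, hAρ ρ₁ hρ₁, hAρ ρ₂ hρ₂, fun v => σ.injective.ne (hρ v)⟩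

/-- A strongly connected digraph on `n > 2` vertices whose Z-mapping graph has all
degrees greater than `n/2` contains two arc-disjoint cycle factors. -/
theorem stmt_15 {V : Type*} [Fintype V] [DecidableEq V] (A : V → V → Prop)
    (hloopless : ∀ v, ¬ A v v)
    (hn : 2 < Fintype.card V)
    (hstrong : ∀ u v : V, Relation.ReflTransGen A u v)
    (hdeg : ∀ x : V ⊕ V, Fintype.card V < 2 * ((Zmap A).neighborSet x).ncard) :
    ∃ σ₁ σ₂ : Equiv.Perm V, (∀ v, A v (σ₁ v)) ∧ (∀ v, A v (σ₂ v)) ∧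
      (∀ v, σ₁ v ≠ σ₂ v) :=
  stmt_15_general A hn hdeg
end
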